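/- For all integers d ≥ 1 and n ≥ d + 1, setting P_{n,d} := W_{n,d} · W_{n,d}ᵀ, one has P_{n,d} · W_{n,d} = n · W_{n,d} and P_{n,d} · W_{n,d−1}ᵀ = 0. -/

import Mathlib

open Matrix Polynomial

/-- `S(G)`: real symmetric matrices whose off-diagonal zero/nonzero pattern
matches the adjacency of `G`; the diagonal is unconstrained. -/
def Sset {V : Type*} [Fintype V] [DecidableEq V] (G : SimpleGraph V) : Set (Matrix V V ℝ) :=
  {M | M.IsSymm ∧ ∀ u v : V, u ≠ v → (M u v ≠ 0 ↔ G.Adj u v)}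

/-- `q(G)`: the minimum number of distinct eigenvalues over matrices in `S(G)`. -/
noncomputable def minQ {V : Type*} [Fintype V] [DecidableEq V] (G : SimpleGraph V) : ℕ :=
  sInf {k : ℕ | ∃ M ∈ Sset G, (spectrum ℝ M).ncard = k}

/-- The Johnson graph `J(n,d)`: vertices are the `d`-element subsets of an `n`-set,
adjacent iff their symmetric difference has two elements. -/
def Johnson (n d : ℕ) : SimpleGraph {s : Finset (Fin n) // s.card = d} where
  Adj α β := (symmDiff α.1 β.1).card = 2
  symm := ⟨by intro a b h; simpa [symmDiff_comm] using h⟩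
  loopless := ⟨by intro a h; simp [symmDiff_self] at h⟩

/-- For `d`-subsets `α, β` with `α ∆ β = {i, j}`, `i < j`, this is
`h(α,β) = |{ℓ ∈ α ∩ β : i < ℓ < j}|`. -/
def hjExp {n : ℕ} (α β : Finset (Fin n)) : ℕ :=
  ((α ∩ β).filter (fun l => (∃ i ∈ symmDiff α β, i < l) ∧ ∃ j ∈ symmDiff α β, l < j)).card

/-- The signed adjacency matrix `A_{n,d}` of the Johnson graph `J(n,d)`:
`A(α,β) = (-1)^{h(α,β)}` when `|α ∆ β| = 2` and `0` otherwise. -/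
def Ajohnson (n d : ℕ) :
    Matrix {s : Finset (Fin n) // s.card = d} {s : Finset (Fin n) // s.card = d} ℝ :=
  fun α β => if (symmDiff α.1 β.1).card = 2 then (-1 : ℝ) ^ hjExp α.1 β.1 else 0

/-- The matrix `W_{n,d}`, rows indexed by `d`-subsets and columns by `(d+1)`-subsets of
an `n`-set: `W(α,β) = (-1)^{|{y ∈ β : y < x}|}` when `α ⊆ β` with `β \ α = {x}`, else `0`. -/
def Wj (n d : ℕ) :
    Matrix {s : Finset (Fin n) // s.card = d} {s : Finset (Fin n) // s.card = d + 1} ℝ :=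
  fun α β => if α.1 ⊆ β.1 then
      (-1 : ℝ) ^ ((β.1.filter (fun y => ∃ x ∈ β.1 \ α.1, y < x)).card)
    else 0

/-- `P_{n,d} := W_{n,d} · W_{n,d}ᵀ`. -/
noncomputable def Pj (n d : ℕ) := Wj n d * (Wj n d)ᵀ

/-!
`W_{n,d}` is the matrix of the simplicial coboundary `δ` of the full simplex on `n` vertices:
a `d`-subset `s` is sent to the signed sum of the subsets `insert x s`, with the sign of
`e_x ∧ e_s` in the exterior algebra. Inserting `x` then `y` and inserting `y` then `x` give
opposite signs, so `δ ∘ δ = 0`. Inserting and deleting anticommute,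
`ι_x ε_y + ε_y ι_x = [x = y]`, and summing this over `x` gives `δᵀδ + δδᵀ = n`. Hence
`P W = W (Wᵀ W) = W (n - W_{n,d+1} W_{n,d+1}ᵀ) = n W` and `P W_{n,d-1}ᵀ = W (W_{n,d-1} W)ᵀ = 0`.
-/

open Finset

lemma sum_sum_eq_zero_of_antisymm {α : Type*} (s : Finset α) (f : α → α → ℝ)
    (hf : ∀ x y, f x y = -f y x) : ∑ x ∈ s, ∑ y ∈ s, f x y = 0 := by
  have h : ∑ x ∈ s, ∑ y ∈ s, f x y = -∑ x ∈ s, ∑ y ∈ s, f x y := by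
    rw [← sum_neg_distrib]
    nth_rw 1 [sum_comm]
    refine sum_congr rfl fun y _ => ?_
    rw [← sum_neg_distrib]
    exact sum_congr rfl fun x _ => hf x y
  linarith

section Coboundary
variable {ι : Type*} [LinearOrder ι]

/-- The sign of `e_x ∧ e_s = ± e_{insert x s}` in the exterior algebra. -/
def insertSign (s : Finset ι) (x : ι) : ℝ := (-1) ^ #{y ∈ s | y < x}

lemma insertSign_mul_self (s : Finset ι) (x : ι) : insertSign s x * insertSign s x = 1 := by
  rw [insertSign, ← pow_add, ← two_mul, pow_mul, neg_one_sq, one_pow]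

lemma insertSign_insert {s : Finset ι} {x : ι} (hx : x ∉ s) (y : ι) :
    insertSign (insert x s) y = (if x < y then -1 else 1) * insertSign s y := by
  rw [insertSign, insertSign, filter_insert]
  split_ifs with h
  · rw [card_insert_of_notMem (by simp [hx]), pow_succ, mul_comm]
  · rw [one_mul]

lemma insertSign_mul_insertSign_insert {s : Finset ι} {x y : ι} (hx : x ∉ s) (hy : y ∉ s)
    (hxy : x ≠ y) :
    insertSign s x * insertSign (insert x s) y = -(insertSign s y * insertSign (insert y s) x) := by
  rw [insertSign_insert hx, insertSign_insert hy]
  rcases hxy.lt_or_gt with h | h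
  · simp only [h, h.not_gt, if_true, if_false]; ring
  · simp only [h, h.not_gt, if_true, if_false]; ring

lemma insertSign_insert_mul_insertSign_insert {s : Finset ι} {x y : ι} (hx : x ∉ s)
    (hy : y ∉ s) (hxy : x ≠ y) :
    insertSign (insert x s) y * insertSign (insert y s) x = -(insertSign s x * insertSign s y) := by
  rw [insertSign_insert hx, insertSign_insert hy]
  rcases hxy.lt_or_gt with h | h
  · simp only [h, h.not_gt, if_true, if_false]; ring
  · simp only [h, h.not_gt, if_true, if_false]; ring

def coboundaryTerm (x : ι) (s t : Finset ι) : ℝ :=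
  if x ∉ s ∧ insert x s = t then insertSign s x else 0

lemma coboundaryTerm_insert_swap (s t : Finset ι) (x y : ι) :
    (if x ∉ s then insertSign s x * coboundaryTerm y (insert x s) t else 0) =
      -(if y ∉ s then insertSign s y * coboundaryTerm x (insert y s) t else 0) := by
  rcases eq_or_ne x y with rfl | hxy
  · simp [coboundaryTerm]
  unfold coboundaryTerm
  by_cases h : x ∉ s ∧ y ∉ s ∧ insert y (insert x s) = t
  · obtain ⟨hx, hy, rfl⟩ := h
    have hyx : y ∉ insert x s := by simp [hy, hxy.symm]
    have hxy' : x ∉ insert y s := by simp [hx, hxy]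
    simp only [hx, hy, hyx, hxy', not_false_eq_true, insert_comm x y, and_self, if_true]
    exact insertSign_mul_insertSign_insert hx hy hxy
  · rw [ite_eq_right_iff.mpr fun hx => by rw [if_neg (by grind), mul_zero],
      ite_eq_right_iff.mpr fun hy => by rw [if_neg (by grind), mul_zero], neg_zero]

lemma coboundaryTerm_anticomm_self (s s' : Finset ι) (x : ι) :
    (if x ∈ s then coboundaryTerm x (s.erase x) s' * insertSign (s.erase x) x else 0) +
      (if x ∉ s' then insertSign s' x * coboundaryTerm x s (insert x s') else 0) =
      if s = s' then 1 else 0 := by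
  unfold coboundaryTerm
  by_cases hx : x ∈ s
  · simp [hx, insert_erase hx, insertSign_mul_self]
  by_cases hx' : x ∈ s'
  · simpa [hx, hx'] using fun h : s = s' => hx (h ▸ hx')
  have insert_cancel : insert x s = insert x s' ↔ s = s' :=
    ⟨fun h => by rw [← erase_insert hx, h, erase_insert hx'], fun h => h ▸ rfl⟩
  by_cases h : s = s' <;> simp [hx, hx', insert_cancel, h, insertSign_mul_self]

lemma coboundaryTerm_anticomm_of_ne (s s' : Finset ι) {x y : ι} (hxy : x ≠ y) :
    (if x ∈ s then coboundaryTerm y (s.erase x) s' * insertSign (s.erase x) x else 0) +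
      (if x ∉ s' then insertSign s' x * coboundaryTerm y s (insert x s') else 0) = 0 := by
  unfold coboundaryTerm
  by_cases hx : x ∉ s
  · have : ¬ (y ∉ s ∧ insert y s = insert x s') := fun ⟨_, h⟩ => by
      have := h ▸ mem_insert_self x s'; grind
    simp [hx, this]
  obtain ⟨I, hxI, rfl⟩ : ∃ I, x ∉ I ∧ s = insert x I :=
    ⟨s.erase x, notMem_erase x s, (insert_erase (not_not.mp hx)).symm⟩
  by_cases hs' : y ∉ I ∧ insert y I = s'
  · obtain ⟨hy, rfl⟩ := hs'
    have hyx : y ∉ insert x I := by simp [hy, hxy.symm]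
    have hxy' : x ∉ insert y I := by simp [hxI, hxy]
    simp only [mem_insert_self, erase_insert hxI, hy, hyx, hxy', not_false_eq_true,
      insert_comm x y, and_self, if_true]
    rw [mul_comm (insertSign (insert y I) x), insertSign_insert_mul_insertSign_insert hxI hy hxy,
      mul_comm, add_neg_cancel]
  · have : ¬ (x ∉ s' ∧ y ∉ insert x I ∧ insert y (insert x I) = insert x s') :=
      fun ⟨hx', hy, h⟩ => hs' ⟨by grind, by rw [← erase_insert hx', ← h, insert_comm,
        erase_insert (by simp [hxI, hxy])]⟩
    simp only [mem_insert_self, erase_insert hxI, hs', if_false, if_true, zero_mul, zero_add]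
    split_ifs with hx' hcond
    · rfl
    · exact absurd ⟨hx', hcond⟩ this
    · rw [mul_zero]

/-- The anticommutation `ι_x ε_y + ε_y ι_x = [x = y]` of deleting `x` and inserting `y`, as an
identity between matrix entries. -/
lemma coboundaryTerm_anticomm (s s' : Finset ι) (x y : ι) :
    (if x ∈ s then coboundaryTerm y (s.erase x) s' * insertSign (s.erase x) x else 0) +
      (if x ∉ s' then insertSign s' x * coboundaryTerm y s (insert x s') else 0) =
      if x = y ∧ s = s' then 1 else 0 := by
  rcases eq_or_ne x y with rfl | hxy
  · simpa using coboundaryTerm_anticomm_self s s' x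
  · simpa [hxy] using coboundaryTerm_anticomm_of_ne s s' hxy

variable [Fintype ι]

def coboundary (s t : Finset ι) : ℝ := ∑ x, coboundaryTerm x s t

lemma sum_coboundary_mul {k : ℕ} (s : Finset ι) (hs : #s + 1 = k) (f : Finset ι → ℝ) :
    ∑ t : {t : Finset ι // #t = k}, coboundary s t.1 * f t.1 =
      ∑ x, if x ∉ s then insertSign s x * f (insert x s) else 0 := by
  simp_rw [coboundary, sum_mul]
  rw [sum_comm]
  refine sum_congr rfl fun x _ => ?_
  unfold coboundaryTerm
  by_cases hx : x ∈ s
  · simp [hx]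
  have hcard : #(insert x s) = k := by rw [card_insert_of_notMem hx, hs]
  rw [Fintype.sum_eq_single ⟨insert x s, hcard⟩ fun t ht => ?_]
  · simp [hx]
  · rw [if_neg fun h => ht (Subtype.ext h.2.symm), zero_mul]

lemma sum_mul_coboundary {k : ℕ} (t : Finset ι) (ht : k + 1 = #t) (g : Finset ι → ℝ) :
    ∑ s : {s : Finset ι // #s = k}, g s.1 * coboundary s.1 t =
      ∑ x, if x ∈ t then g (t.erase x) * insertSign (t.erase x) x else 0 := by
  simp_rw [coboundary, mul_sum]
  rw [sum_comm]
  refine sum_congr rfl fun x _ => ?_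
  unfold coboundaryTerm
  by_cases hx : x ∉ t
  · refine (sum_eq_zero fun s _ => ?_).trans (if_neg hx).symm
    rw [if_neg fun h : x ∉ s.1 ∧ insert x s.1 = t => hx (h.2 ▸ mem_insert_self x s.1),
      mul_zero]
  rw [not_not] at hx
  have hcard : #(t.erase x) = k := by rw [card_erase_of_mem hx, ← ht, Nat.add_sub_cancel]
  rw [Fintype.sum_eq_single ⟨t.erase x, hcard⟩ fun s hs => ?_]
  · simp [hx, insert_erase hx]
  · rw [if_neg fun h => hs (Subtype.ext (by simp [← h.2, erase_insert h.1])), mul_zero]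

def coboundaryMatrix (ι : Type*) [LinearOrder ι] [Fintype ι] (k : ℕ) :
    Matrix {s : Finset ι // #s = k} {s : Finset ι // #s = k + 1} ℝ :=
  fun s t => coboundary s.1 t.1

theorem coboundaryMatrix_mul_coboundaryMatrix (k : ℕ) :
    coboundaryMatrix ι k * coboundaryMatrix ι (k + 1) = 0 := by
  ext s u
  simp_rw [Matrix.mul_apply, coboundaryMatrix, Matrix.zero_apply]
  rw [sum_coboundary_mul s.1 (by rw [s.2]) (coboundary · u.1)]
  simp_rw [coboundary, mul_sum, ite_sum_zero]
  exact sum_sum_eq_zero_of_antisymm _ _ (coboundaryTerm_insert_swap s.1 u.1)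

theorem coboundaryMatrix_transpose_mul_add_mul_transpose (k : ℕ) :
    (coboundaryMatrix ι k)ᵀ * coboundaryMatrix ι k +
        coboundaryMatrix ι (k + 1) * (coboundaryMatrix ι (k + 1))ᵀ =
      (Fintype.card ι : ℝ) • 1 := by
  ext t t'
  have ht : #t.1 + 1 = k + 1 + 1 := by rw [t.2]
  simp_rw [Matrix.add_apply, Matrix.mul_apply, transpose_apply, coboundaryMatrix,
    Matrix.smul_apply, one_apply, smul_eq_mul, mul_boole]
  rw [sum_mul_coboundary t'.1 t'.2.symm (coboundary · t.1),
    sum_coboundary_mul t.1 ht (coboundary t'.1)]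
  simp_rw [coboundary, sum_mul, mul_sum, ite_sum_zero, ← sum_add_distrib, coboundaryTerm_anticomm,
    Subtype.ext_iff, eq_comm (a := t'.1)]
  by_cases h : t.1 = t'.1 <;> simp [h]

end Coboundary

lemma Wj_eq_coboundaryMatrix (n d : ℕ) : Wj n d = coboundaryMatrix (Fin n) d := by
  ext α β
  rw [Wj, coboundaryMatrix, coboundary]
  split_ifs with h
  · obtain ⟨x, hx, hβ⟩ := exists_eq_insert_iff.mpr ⟨h, by rw [α.2, β.2]⟩
    rw [Fintype.sum_eq_single x fun y hy => ?_]
    · rw [coboundaryTerm, if_pos ⟨hx, hβ⟩, insertSign, ← hβ]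
      simp [insert_sdiff_of_notMem _ hx, filter_insert]
    · refine if_neg fun ⟨_, hβ'⟩ => hy ?_
      have := hβ' ▸ hβ ▸ mem_insert_self x α.1
      grind
  · exact (sum_eq_zero fun x _ => if_neg fun ⟨_, h'⟩ => h (h' ▸ subset_insert x α.1)).symm

theorem stmt_8_general (n d : ℕ) :
    Pj n (d + 1) * Wj n (d + 1) = (n : ℝ) • Wj n (d + 1) ∧
    Pj n (d + 1) * (Wj n d)ᵀ = 0 := by
  simp only [Pj, Wj_eq_coboundaryMatrix]
  have hlap := coboundaryMatrix_transpose_mul_add_mul_transpose (ι := Fin n) (d + 1)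
  rw [Fintype.card_fin] at hlap
  constructor
  · rw [Matrix.mul_assoc, eq_sub_of_add_eq hlap, Matrix.mul_sub, Matrix.mul_smul, Matrix.mul_one,
      ← Matrix.mul_assoc, coboundaryMatrix_mul_coboundaryMatrix, Matrix.zero_mul, sub_zero]
  · rw [Matrix.mul_assoc, ← transpose_mul, coboundaryMatrix_mul_coboundaryMatrix, transpose_zero,
      Matrix.mul_zero]

/-- For all integers `d ≥ 1` and `n ≥ d + 1`, with
`P_{n,d} := W_{n,d}·W_{n,d}ᵀ`, one has `P_{n,d}·W_{n,d} = n·W_{n,d}` and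
`P_{n,d}·W_{n,d−1}ᵀ = 0`.  (Stated with `d` replaced by `d + 1`.) -/
theorem stmt_8 (n d : ℕ) (hn : d + 2 ≤ n) :
    Pj n (d + 1) * Wj n (d + 1) = (n : ℝ) • Wj n (d + 1) ∧
    Pj n (d + 1) * (Wj n d)ᵀ = 0 :=
  stmt_8_general n d
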